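/- arXiv:2503.20546 — 3 statements merged into one kernel-verified Lean document; each statement's English description precedes it below -/
import Mathlib

section
/- If S ⊥ Y | {X, Z} (i.e., Y is conditionally independent of S given X and Z), then E[Y | X] = E[ E[Y | X, Z, S = 1] | X ] almost surely. -/
open MeasureTheory ProbabilityTheory

/-- If `S ⊥ Y | (X, Z)` then `E[Y | X] = E[ E[Y | X, Z, S = 1] | X ]` a.s., where
`E[Y | X, Z, S = 1] = E[Y·1_{S=1} | X, Z] / P(S = 1 | X, Z)`.  Since `S` takes values
in `{0,1}`, `1_{S=1} = S`. -/
theorem stmt0 {Ω : Type*} [m0 : MeasurableSpace Ω] (μ : Measure Ω) [IsProbabilityMeasure μ]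
    (X Z Y S : Ω → ℝ) (hY : Integrable Y μ)
    (hS01 : ∀ ω, S ω = 0 ∨ S ω = 1)
    (mXZ mX : MeasurableSpace Ω)
    (hmXZ : mXZ = MeasurableSpace.comap (fun ω => (X ω, Z ω)) inferInstance)
    (hmX : mX = MeasurableSpace.comap X inferInstance)
    (hle : mXZ ≤ m0) (hle' : mX ≤ mXZ)
    -- conditional independence of Y and S given (X, Z):
    (hCI : μ[fun ω => Y ω * S ω | mXZ] =ᵐ[μ]
      fun ω => (μ[Y | mXZ]) ω * (μ[S | mXZ]) ω)
    -- positivity of P(S = 1 | X, Z):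
    (hpos : ∀ᵐ ω ∂μ, 0 < (μ[S | mXZ]) ω) :
    μ[Y | mX] =ᵐ[μ]
      μ[fun ω => (μ[fun ω' => Y ω' * S ω' | mXZ]) ω / (μ[S | mXZ]) ω | mX] := by
  have h1 : (fun ω => (μ[fun ω' => Y ω' * S ω' | mXZ]) ω / (μ[S | mXZ]) ω)
      =ᵐ[μ] μ[Y | mXZ] := by
    filter_upwards [hCI, hpos] with ω hCIω hposω
    simp only [hCIω]
    field_simp
  have h2 := condExp_condExp_of_le (μ := μ) (f := Y) hle' hle
  calc μ[Y | mX] =ᵐ[μ] μ[μ[Y | mXZ] | mX] := h2.symm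
    _ =ᵐ[μ] μ[fun ω => (μ[fun ω' => Y ω' * S ω' | mXZ]) ω / (μ[S | mXZ]) ω | mX] :=
      condExp_congr_ae h1.symm
end

section
/- Let Y be integrable, S ∈ {0,1} with p(x, z) := P(S = 1 | X = x, Z = z) > 0, and suppose Y ⊥ S | (X, Z). Then for any bounded measurable h, E[h(X) Y] = E[ h(X) · E[Y | X, Z, S = 1] ], where E[Y | X, Z, S = 1] = E[Y 1_{S=1} | X, Z] / p(X, Z). -/
open MeasureTheory ProbabilityTheory

/-- Population version of repeated regression: under `Y ⊥ S | (X, Z)` and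
`P(S = 1 | X, Z) > 0`, for any bounded measurable `h`,
`E[h(X) Y] = E[h(X) · E[Y | X, Z, S = 1]]`, where
`E[Y | X, Z, S = 1] = E[Y·1_{S=1} | X, Z] / P(S = 1 | X, Z)`.
Since `S` takes values in `{0,1}`, `1_{S=1} = S`. -/
theorem stmt15 {Ω : Type*} [m0 : MeasurableSpace Ω] (μ : Measure Ω) [IsProbabilityMeasure μ]
    (X Z Y S : Ω → ℝ) (hY : Integrable Y μ)
    (hS01 : ∀ ω, S ω = 0 ∨ S ω = 1)
    (mXZ : MeasurableSpace Ω)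
    (hmXZ : mXZ = MeasurableSpace.comap (fun ω => (X ω, Z ω)) inferInstance)
    (hle : mXZ ≤ m0)
    -- conditional independence: E[Y·1_{S=1} | X, Z] = E[Y | X, Z] · P(S=1 | X, Z) a.s.
    (hCI : μ[fun ω => Y ω * S ω | mXZ] =ᵐ[μ]
      fun ω => (μ[Y | mXZ]) ω * (μ[S | mXZ]) ω)
    -- positivity of P(S = 1 | X, Z):
    (hpos : ∀ᵐ ω ∂μ, 0 < (μ[S | mXZ]) ω)
    (h : ℝ → ℝ) (hhm : Measurable h) (C : ℝ) (hhbd : ∀ t, |h t| ≤ C) :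
    ∫ ω, h (X ω) * Y ω ∂μ
      = ∫ ω, h (X ω) * ((μ[fun ω' => Y ω' * S ω' | mXZ]) ω / (μ[S | mXZ]) ω) ∂μ := by
  -- h(X) is mXZ-measurable
  have hXZ : Measurable[mXZ] (fun ω => (X ω, Z ω)) := by
    rw [hmXZ]; exact Measurable.of_comap_le le_rfl
  have hhX : StronglyMeasurable[mXZ] (fun ω => h (X ω)) :=
    (hhm.comp (measurable_fst.comp hXZ)).stronglyMeasurable
  have hInt : Integrable (fun ω => h (X ω) * Y ω) μ :=
    hY.bdd_mul (c := C) (hhX.mono hle).aestronglyMeasurable (Filter.Eventually.of_forall fun ω => by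
      simpa using hhbd (X ω))
  -- pull-out property
  have hpull : μ[fun ω => h (X ω) * Y ω | mXZ] =ᵐ[μ]
      fun ω => h (X ω) * (μ[Y | mXZ]) ω :=
    condExp_mul_of_stronglyMeasurable_left hhX hInt hY
  -- ratio equals E[Y | mXZ] a.e.
  have hratio : (fun ω => h (X ω) * ((μ[fun ω' => Y ω' * S ω' | mXZ]) ω / (μ[S | mXZ]) ω))
      =ᵐ[μ] fun ω => h (X ω) * (μ[Y | mXZ]) ω := by
    filter_upwards [hCI, hpos] with ω hCIω hposω
    rw [hCIω, mul_div_assoc, div_self (ne_of_gt hposω), mul_one]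
  calc ∫ ω, h (X ω) * Y ω ∂μ
      = ∫ ω, (μ[fun ω => h (X ω) * Y ω | mXZ]) ω ∂μ := (integral_condExp hle).symm
    _ = ∫ ω, h (X ω) * (μ[Y | mXZ]) ω ∂μ := integral_congr_ae hpull
    _ = ∫ ω, h (X ω) * ((μ[fun ω' => Y ω' * S ω' | mXZ]) ω / (μ[S | mXZ]) ω) ∂μ :=
        (integral_congr_ae hratio).symm
end

section
/- Let P₁ and P₂ be two joint distributions of (X, Z, Y, S) both satisfying: (i) Y ⊥ S | (X, Z), and (ii) P_i(S = 1 | X = x, Z = z) > 0 for all (x, z). If P₁(Y ∈ · | X, Z, S = 1) = P₂(Y ∈ · | X, Z, S = 1) a.s. and P₁(X, Z) = P₂(X, Z) (marginals agree), then P₁(Y ∈ · | X) = P₂(Y ∈ · | X) a.s. -/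
open MeasureTheory ProbabilityTheory Set

namespace Stmt16Aux

variable {A : Type*} [mA : MeasurableSpace A] [StandardBorelSpace A] [Nonempty A]
  {μ : Measure A} [IsProbabilityMeasure μ]
  {W : A → ℝ × ℝ} {Y : A → ℝ} {S : A → Bool}

lemma key_lintegral (hW : Measurable W) (hY : Measurable Y) (hS : Measurable S)
    (hle : MeasurableSpace.comap W inferInstance ≤ mA)
    (hCI : CondIndepFun (MeasurableSpace.comap W inferInstance) hle Y S μ)
    {u : Set (ℝ × ℝ)} (hu : MeasurableSet u) {t : Set ℝ} (ht : MeasurableSet t) :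
    ∫⁻ a in W ⁻¹' u ∩ S ⁻¹' {true}, condDistrib Y W μ (W a) t ∂μ
      = μ (W ⁻¹' u ∩ (Y ⁻¹' t ∩ S ⁻¹' {true})) := by
  have hSt : MeasurableSet (S ⁻¹' {true}) := hS (measurableSet_singleton true)
  have hWu : MeasurableSet (W ⁻¹' u) := hW hu
  set f : A → ℝ := fun a => (condDistrib Y W μ (W a) t).toReal with hfdef
  set g : A → ℝ := (S ⁻¹' {true}).indicator (fun _ => (1 : ℝ)) with hgdef
  have hfm : StronglyMeasurable[MeasurableSpace.comap W inferInstance] f :=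
    (Measurable.ennreal_toReal (measurable_condDistrib ht)).stronglyMeasurable
  have hf_int : Integrable f μ := integrable_toReal_condDistrib hW.aemeasurable ht
  have hg_int : Integrable g μ := (integrable_const 1).indicator hSt
  have hfg : f * g = (S ⁻¹' {true}).indicator f := by
    funext a
    by_cases h : a ∈ S ⁻¹' {true} <;>
      simp [hgdef, Set.indicator_of_mem, Set.indicator_of_notMem, h]
  have hfg_int : Integrable (f * g) μ := by rw [hfg]; exact hf_int.indicator hSt
  have hind_int : Integrable ((Y ⁻¹' t ∩ S ⁻¹' {true}).indicator (fun _ => (1 : ℝ))) μ :=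
    (integrable_const 1).indicator ((hY ht).inter hSt)
  have h1 : (fun a => (condDistrib Y W μ (W a) t).toReal)
      =ᵐ[μ] μ⟦Y ⁻¹' t | MeasurableSpace.comap W inferInstance⟧ :=
    condDistrib_ae_eq_condExp hW hY ht
  have h2 : (fun a => (condDistrib S W μ (W a) {true}).toReal)
      =ᵐ[μ] μ⟦S ⁻¹' {true} | MeasurableSpace.comap W inferInstance⟧ :=
    condDistrib_ae_eq_condExp hW hS (measurableSet_singleton true)
  have hCI' := (condIndepFun_iff_condExp_inter_preimage_eq_mul hY hS).mp hCI t {true} ht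
    (measurableSet_singleton true)
  have hmul : μ[f * g | MeasurableSpace.comap W inferInstance]
      =ᵐ[μ] f * μ[g | MeasurableSpace.comap W inferInstance] :=
    condExp_mul_of_stronglyMeasurable_left hfm hfg_int hg_int
  -- toReal of LHS
  have hB : (∫⁻ a in W ⁻¹' u ∩ S ⁻¹' {true}, condDistrib Y W μ (W a) t ∂μ).toReal
      = ∫ a in W ⁻¹' u, (f * g) a ∂μ := by
    rw [hfg, setIntegral_indicator hSt]
    exact (integral_toReal (((Kernel.measurable_coe _ ht).comp hW).aemeasurable.restrict)
      (Filter.Eventually.of_forall fun a => measure_lt_top _ _)).symm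
  have hBC : ∫ a in W ⁻¹' u, (f * g) a ∂μ
      = ∫ a in W ⁻¹' u, f a * (μ[g | MeasurableSpace.comap W inferInstance]) a ∂μ := by
    rw [← setIntegral_condExp hle hfg_int ⟨u, hu, rfl⟩]
    refine setIntegral_congr_ae hWu ?_
    filter_upwards [hmul] with a ha _
    simpa using ha
  -- toReal of RHS
  have hA : (μ (W ⁻¹' u ∩ (Y ⁻¹' t ∩ S ⁻¹' {true}))).toReal
      = ∫ a in W ⁻¹' u, ((Y ⁻¹' t ∩ S ⁻¹' {true}).indicator (fun _ => (1 : ℝ))) a ∂μ := by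
    rw [setIntegral_indicator ((hY ht).inter hSt), setIntegral_const, smul_eq_mul, mul_one, measureReal_def]
  have hA2 : ∫ a in W ⁻¹' u, ((Y ⁻¹' t ∩ S ⁻¹' {true}).indicator (fun _ => (1 : ℝ))) a ∂μ
      = ∫ a in W ⁻¹' u, f a * (μ[g | MeasurableSpace.comap W inferInstance]) a ∂μ := by
    rw [← setIntegral_condExp hle hind_int ⟨u, hu, rfl⟩]
    refine setIntegral_congr_ae hWu ?_
    filter_upwards [hCI', h1, h2] with a hCIa h1a h2a _
    rw [hCIa, ← h1a, ← h2a]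
  have hne : ∫⁻ a in W ⁻¹' u ∩ S ⁻¹' {true}, condDistrib Y W μ (W a) t ∂μ ≠ ⊤ := by
    refine ne_top_of_le_ne_top (measure_ne_top μ (W ⁻¹' u ∩ S ⁻¹' {true})) ?_
    calc ∫⁻ a in W ⁻¹' u ∩ S ⁻¹' {true}, condDistrib Y W μ (W a) t ∂μ
        ≤ ∫⁻ _ in W ⁻¹' u ∩ S ⁻¹' {true}, 1 ∂μ := lintegral_mono fun a => prob_le_one
      _ = μ (W ⁻¹' u ∩ S ⁻¹' {true}) := setLIntegral_one _
  refine (ENNReal.toReal_eq_toReal_iff' hne (measure_ne_top _ _)).mp ?_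
  rw [hB, hBC, hA, hA2]

lemma compProd_cond (hW : Measurable W) (hY : Measurable Y) (hS : Measurable S)
    (hle : MeasurableSpace.comap W inferInstance ≤ mA)
    (hCI : CondIndepFun (MeasurableSpace.comap W inferInstance) hle Y S μ)
    (hS0 : μ (S ⁻¹' {true}) ≠ 0) :
    (μ[|S ⁻¹' {true}]).map (fun a => (W a, Y a))
      = ((μ[|S ⁻¹' {true}]).map W) ⊗ₘ condDistrib Y W μ := by
  have hSt : MeasurableSet (S ⁻¹' {true}) := hS (measurableSet_singleton true)
  haveI : IsProbabilityMeasure (μ[|S ⁻¹' {true}]) := cond_isProbabilityMeasure hS0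
  haveI : IsProbabilityMeasure ((μ[|S ⁻¹' {true}]).map (fun a => (W a, Y a))) :=
    Measure.isProbabilityMeasure_map (hW.prodMk hY).aemeasurable
  haveI : IsProbabilityMeasure ((μ[|S ⁻¹' {true}]).map W) :=
    Measure.isProbabilityMeasure_map hW.aemeasurable
  refine ext_of_generate_finite _ generateFrom_prod.symm isPiSystem_prod ?_ ?_
  · rintro s ⟨u, hu', t, ht', rfl⟩
    have hu : MeasurableSet u := hu'
    have ht : MeasurableSet t := ht'
    have hWu : MeasurableSet (W ⁻¹' u) := hW hu
    have hcond : μ[|S ⁻¹' {true}] = (μ (S ⁻¹' {true}))⁻¹ • μ.restrict (S ⁻¹' {true}) := rfl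
    rw [Measure.map_apply (hW.prodMk hY) (hu.prod ht), mk_preimage_prod,
      cond_apply hSt, Measure.compProd_apply_prod hu ht,
      setLIntegral_map hu (Kernel.measurable_coe _ ht) hW, hcond,
      Measure.restrict_smul, lintegral_smul_measure, Measure.restrict_restrict hWu,
      key_lintegral hW hY hS hle hCI hu ht,
      show S ⁻¹' {true} ∩ (W ⁻¹' u ∩ Y ⁻¹' t) = W ⁻¹' u ∩ (Y ⁻¹' t ∩ S ⁻¹' {true}) from by
        ext a; simp only [Set.mem_inter_iff]; tauto, smul_eq_mul]
  · simp

lemma cd_cond (hW : Measurable W) (hY : Measurable Y) (hS : Measurable S)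
    (hle : MeasurableSpace.comap W inferInstance ≤ mA)
    (hCI : CondIndepFun (MeasurableSpace.comap W inferInstance) hle Y S μ)
    (hS0 : μ (S ⁻¹' {true}) ≠ 0) :
    ∀ᵐ p ∂((μ[|S ⁻¹' {true}]).map W),
      condDistrib Y W μ p = condDistrib Y W (μ[|S ⁻¹' {true}]) p := by
  haveI : IsProbabilityMeasure (μ[|S ⁻¹' {true}]) := cond_isProbabilityMeasure hS0
  exact (condDistrib_ae_eq_of_measure_eq_compProd W hY.aemeasurable
    (compProd_cond hW hY hS hle hCI hS0)).symm

lemma ac_cond (hW : Measurable W) (hS : Measurable S)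
    (hpos : ∀ p : ℝ × ℝ, 0 < condDistrib S W μ p {true})
    (hS0 : μ (S ⁻¹' {true}) ≠ 0) :
    μ.map W ≪ (μ[|S ⁻¹' {true}]).map W := by
  have hSt : MeasurableSet (S ⁻¹' {true}) := hS (measurableSet_singleton true)
  refine Measure.AbsolutelyContinuous.mk ?_
  intro u hu h0
  have hWu : MeasurableSet (W ⁻¹' u) := hW hu
  rw [Measure.map_apply hW hu, cond_apply hSt] at h0
  have hinv : (μ (S ⁻¹' {true}))⁻¹ ≠ 0 := ENNReal.inv_ne_zero.mpr (measure_ne_top μ _)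
  have h0' : μ (S ⁻¹' {true} ∩ W ⁻¹' u) = 0 := by
    rcases mul_eq_zero.mp h0 with h | h
    · exact absurd h hinv
    · exact h
  have hlint : ∫⁻ a in W ⁻¹' u, condDistrib S W μ (W a) {true} ∂μ = 0 := by
    rw [setLIntegral_condDistrib_of_measurableSet hW hS.aemeasurable
      (measurableSet_singleton true) ⟨u, hu, rfl⟩]
    rw [Set.inter_comm] at h0'
    exact h0'
  have := (setLIntegral_eq_zero_iff hWu
    ((Kernel.measurable_coe _ (measurableSet_singleton true)).comp hW)).mp hlint
  have h3 : μ {a | W a ∈ u ∧ ¬ condDistrib S W μ (W a) {true} = 0} = 0 := by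
    simpa using ae_iff.mp this
  rw [Measure.map_apply hW hu]
  have hset : W ⁻¹' u = {a | W a ∈ u ∧ ¬ condDistrib S W μ (W a) {true} = 0} := by
    ext a
    constructor
    · intro h
      exact ⟨h, (hpos (W a)).ne'⟩
    · rintro ⟨h, -⟩
      exact h
  rw [hset]
  exact h3

end Stmt16Aux

open Stmt16Aux

/-- s-recoverability of `P(Y | X)` with external data over `(X, Z)` under PMAR:
if two joint laws `μ₁, μ₂` of `(X, Z, Y, S)` both satisfy `Y ⊥ S | (X, Z)` and
`P_i(S = 1 | X = x, Z = z) > 0` for all `(x, z)`, and if their selection-biased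
conditional laws `P_i(Y ∈ · | X, Z, S = 1)` agree a.s. and their `(X, Z)` marginals
agree, then `P₁(Y ∈ · | X) = P₂(Y ∈ · | X)` a.s. -/
theorem stmt16 {A : Type*} [mA : MeasurableSpace A] [StandardBorelSpace A] [Nonempty A]
    (μ₁ μ₂ : Measure A) [IsProbabilityMeasure μ₁] [IsProbabilityMeasure μ₂]
    (X Z Y : A → ℝ) (S : A → Bool)
    (hX : Measurable X) (hZ : Measurable Z) (hYm : Measurable Y) (hS : Measurable S)
    (hle : MeasurableSpace.comap (fun a => (X a, Z a)) inferInstance ≤ mA)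
    -- (i) conditional independence Y ⊥ S | (X, Z) under both laws:
    (hCI1 : CondIndepFun (MeasurableSpace.comap (fun a => (X a, Z a)) inferInstance) hle Y S μ₁)
    (hCI2 : CondIndepFun (MeasurableSpace.comap (fun a => (X a, Z a)) inferInstance) hle Y S μ₂)
    -- (ii) pointwise positivity of P_i(S = 1 | X = x, Z = z):
    (hpos1 : ∀ p : ℝ × ℝ, 0 < condDistrib S (fun a => (X a, Z a)) μ₁ p {true})
    (hpos2 : ∀ p : ℝ × ℝ, 0 < condDistrib S (fun a => (X a, Z a)) μ₂ p {true})
    (hS1 : μ₁ {a | S a = true} ≠ 0) (hS2 : μ₂ {a | S a = true} ≠ 0)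
    -- the selection-biased conditional laws of Y given (X, Z) agree a.s.:
    (hsel : ∀ᵐ p ∂(Measure.map (fun a => (X a, Z a)) (μ₁[|{a | S a = true}])),
      condDistrib Y (fun a => (X a, Z a)) (μ₁[|{a | S a = true}]) p
        = condDistrib Y (fun a => (X a, Z a)) (μ₂[|{a | S a = true}]) p)
    -- the (X, Z) marginals agree:
    (hmarg : Measure.map (fun a => (X a, Z a)) μ₁ = Measure.map (fun a => (X a, Z a)) μ₂) :
    ∀ᵐ x ∂(Measure.map X μ₁),
      condDistrib Y X μ₁ x = condDistrib Y X μ₂ x := by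
  have hW : Measurable (fun a => (X a, Z a)) := hX.prodMk hZ
  -- transfer hsel and the two conditional-measure identifications to `μ₁.map (X, Z)`
  have hac1 : μ₁.map (fun a => (X a, Z a)) ≪ (μ₁[|S ⁻¹' {true}]).map (fun a => (X a, Z a)) :=
    ac_cond hW hS hpos1 hS1
  have hac2 : μ₂.map (fun a => (X a, Z a)) ≪ (μ₂[|S ⁻¹' {true}]).map (fun a => (X a, Z a)) :=
    ac_cond hW hS hpos2 hS2
  have hsel2 : ∀ᵐ p ∂((μ₁[|S ⁻¹' {true}]).map (fun a => (X a, Z a))),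
      condDistrib Y (fun a => (X a, Z a)) (μ₁[|S ⁻¹' {true}]) p
        = condDistrib Y (fun a => (X a, Z a)) (μ₂[|S ⁻¹' {true}]) p := hsel
  have h1 := cd_cond hW hYm hS hle hCI1 hS1
  have h2 := cd_cond hW hYm hS hle hCI2 hS2
  have h1' := hac1.ae_le h1
  have hsel' := hac1.ae_le hsel2
  have h2' : ∀ᵐ p ∂(μ₁.map fun a => (X a, Z a)),
      condDistrib Y (fun a => (X a, Z a)) μ₂ p
        = condDistrib Y (fun a => (X a, Z a)) (μ₂[|S ⁻¹' {true}]) p := by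
    rw [hmarg]
    exact hac2.ae_le h2
  have hkk : condDistrib Y (fun a => (X a, Z a)) μ₁
      =ᵐ[μ₁.map fun a => (X a, Z a)] condDistrib Y (fun a => (X a, Z a)) μ₂ := by
    filter_upwards [h1', hsel', h2'] with p e1 e2 e3
    rw [e1, e2, ← e3]
  -- joint laws of ((X,Z), Y) agree
  have hd1 : μ₁.map (fun a => ((X a, Z a), Y a))
      = (μ₁.map fun a => (X a, Z a)) ⊗ₘ condDistrib Y (fun a => (X a, Z a)) μ₁ := by
    rw [condDistrib_def, ← Measure.fst_map_prodMk₀ (X := fun a => (X a, Z a)) hYm.aemeasurable]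
    exact (Measure.disintegrate (ρ := _) (ρCond := _)).symm
  have hd2 : μ₂.map (fun a => ((X a, Z a), Y a))
      = (μ₂.map fun a => (X a, Z a)) ⊗ₘ condDistrib Y (fun a => (X a, Z a)) μ₂ := by
    rw [condDistrib_def, ← Measure.fst_map_prodMk₀ (X := fun a => (X a, Z a)) hYm.aemeasurable]
    exact (Measure.disintegrate (ρ := _) (ρCond := _)).symm
  have hjoint : μ₁.map (fun a => ((X a, Z a), Y a)) = μ₂.map (fun a => ((X a, Z a), Y a)) := by
    rw [hd1, hd2, Measure.compProd_congr hkk, hmarg]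
  -- hence the joint laws of (X, Y) agree
  have hg : Measurable (fun p : (ℝ × ℝ) × ℝ => (p.1.1, p.2)) :=
    (measurable_fst.comp measurable_fst).prodMk measurable_snd
  have hXY : μ₁.map (fun a => (X a, Y a)) = μ₂.map (fun a => (X a, Y a)) := by
    have e1 : μ₁.map (fun a => (X a, Y a))
        = (μ₁.map (fun a => ((X a, Z a), Y a))).map (fun p => (p.1.1, p.2)) := by
      rw [Measure.map_map hg (hW.prodMk hYm)]
      rfl
    have e2 : μ₂.map (fun a => (X a, Y a))
        = (μ₂.map (fun a => ((X a, Z a), Y a))).map (fun p => (p.1.1, p.2)) := by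
      rw [Measure.map_map hg (hW.prodMk hYm)]
      rfl
    rw [e1, e2, hjoint]
  have hfinal : condDistrib Y X μ₁ = condDistrib Y X μ₂ := by
    rw [condDistrib_def, condDistrib_def]
    congr 1
  filter_upwards with x
  rw [hfinal]
end
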